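/- For a uniformly random restricted growth sequence π of length n ≥ 3 and a pair (1, j) with 3 ≤ j ≤ n, the probability that (1,j) is a weak but not strong visible pair equals B_{n−j+2}/B_n. -/

import Mathlib

/-- Stirling numbers of the second kind. -/
def stirlingS2 : ℕ → ℕ → ℕ
  | 0, 0 => 1
  | 0, _ + 1 => 0
  | _ + 1, 0 => 0
  | n + 1, k + 1 => (k + 1) * stirlingS2 n (k + 1) + stirlingS2 n k

/-- Bell numbers. -/
def bell (n : ℕ) : ℕ := ∑ k ∈ Finset.range (n + 1), stirlingS2 n k

/-- Restricted growth sequence of length `n` (positive letters, starts at 1,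
each next letter at most one more than the running maximum). -/
def IsRGS {n : ℕ} (π : Fin n → ℕ) : Prop :=
  (∀ i, 1 ≤ π i) ∧ (∀ h : 0 < n, π ⟨0, h⟩ = 1) ∧
    ∀ (j : Fin n) (h : j.val + 1 < n), π ⟨j.val + 1, h⟩ ≤ 1 + (Finset.Iic j).sup π

/-- `(i,j)` is a strong visible pair of `π`. -/
def StrongVisible {n : ℕ} (π : Fin n → ℕ) (i j : Fin n) : Prop :=
  i < j ∧ ∀ ℓ, i < ℓ → ℓ < j → π ℓ < min (π i) (π j)

/-- `(i,j)` is a weak visible pair of `π`. -/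
def WeakVisible {n : ℕ} (π : Fin n → ℕ) (i j : Fin n) : Prop :=
  i < j ∧ ∀ ℓ, i < ℓ → ℓ < j → π ℓ ≤ min (π i) (π j)

instance {n : ℕ} (π : Fin n → ℕ) (i j : Fin n) : Decidable (StrongVisible π i j) := by
  unfold StrongVisible; infer_instance

instance {n : ℕ} (π : Fin n → ℕ) (i j : Fin n) : Decidable (WeakVisible π i j) := by
  unfold WeakVisible; infer_instance

/-!
Since `π 0 = 1` and all letters are positive, `(0, k)` with `k ≥ 2` is never strongly visible
(a letter strictly between would have to be `< 1`), and it is weakly visible exactly when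
`π 0 = ⋯ = π (k - 1) = 1`. Prepending a `1` to a restricted growth sequence starting with `1`
gives again such a sequence, so deleting `k - 1` of the leading ones is a bijection onto all
restricted growth sequences of length `n - k + 1`. These are counted by `B_{n-k+1}`: sorted by
their maximum letter `b`, appending a last letter gives the Stirling recursion
`S(m+1, b+1) = (b+1) S(m, b+1) + S(m, b)`.
-/

-- With `Iio` in place of `Iic`, the empty supremum `0` at `i = 0` encodes `π 0 = 1`.
theorem isRGS_iff {n : ℕ} {π : Fin n → ℕ} :
    IsRGS π ↔ ∀ i, 1 ≤ π i ∧ π i ≤ 1 + (Finset.Iio i).sup π := by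
  have Iio_succ (j : Fin n) (h : j.val + 1 < n) :
      Finset.Iio (⟨j.val + 1, h⟩ : Fin n) = Finset.Iic j := by
    ext ℓ
    simp only [Finset.mem_Iio, Finset.mem_Iic, Fin.lt_def, Fin.le_def]
    omega
  constructor
  · rintro ⟨hpos, hzero, hstep⟩ ⟨i, hi⟩
    refine ⟨hpos _, ?_⟩
    cases i with
    | zero => simp [hzero hi]
    | succ j => simpa [Iio_succ ⟨j, by omega⟩ hi] using hstep ⟨j, by omega⟩ hi
  · intro h
    refine ⟨fun i => (h i).1, fun hn => ?_, fun j hj => ?_⟩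
    · have hempty : Finset.Iio (⟨0, hn⟩ : Fin n) = ∅ := by ext ℓ; simp [Fin.lt_def]
      have := h ⟨0, hn⟩
      simp only [hempty, Finset.sup_empty, bot_eq_zero', add_zero] at this
      omega
    · simpa [Iio_succ j hj] using (h ⟨j.val + 1, hj⟩).2

theorem Fin.sup_Iio_castSucc_snoc {m : ℕ} (ρ : Fin m → ℕ) (v : ℕ) (i : Fin m) :
    (Finset.Iio i.castSucc).sup (Fin.snoc ρ v : Fin (m + 1) → ℕ) = (Finset.Iio i).sup ρ := by
  simp [← Fin.map_castSuccEmb_Iio, Finset.sup_map, Function.comp_def]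

theorem Fin.sup_Iio_last_snoc {m : ℕ} (ρ : Fin m → ℕ) (v : ℕ) :
    (Finset.Iio (Fin.last m)).sup (Fin.snoc ρ v : Fin (m + 1) → ℕ) = Finset.univ.sup ρ := by
  simp [Fin.Iio_last_eq_map, Finset.sup_map, Function.comp_def]

theorem Fin.sup_Iio_succ_cons {m : ℕ} (a : ℕ) (σ : Fin m → ℕ) (i : Fin m) :
    (Finset.Iio i.succ).sup (Fin.cons a σ : Fin (m + 1) → ℕ) = max a ((Finset.Iio i).sup σ) := by
  have : Finset.Iio i.succ = insert 0 ((Finset.Iio i).map (Fin.succEmb m)) := by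
    ext ℓ; cases ℓ using Fin.cases <;> simp [Fin.succ_pos]
  rw [this, Finset.sup_insert, Finset.sup_map]
  simp [Function.comp_def]

theorem Fin.sup_univ_snoc {m : ℕ} (ρ : Fin m → ℕ) (v : ℕ) :
    Finset.univ.sup (Fin.snoc ρ v : Fin (m + 1) → ℕ) = max (Finset.univ.sup ρ) v := by
  rw [Fin.univ_castSuccEmb, Finset.sup_cons, Finset.sup_map]
  simp [Function.comp_def, max_comm]

theorem Fin.snoc_uncurry_injective {m : ℕ} :
    Function.Injective (fun p : (Fin m → ℕ) × ℕ => (Fin.snoc p.1 p.2 : Fin (m + 1) → ℕ)) :=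
  fun _ _ h => Prod.ext_iff.2 (Fin.snoc_injective2 h)

theorem isRGS_snoc_iff {m : ℕ} (ρ : Fin m → ℕ) (v : ℕ) :
    IsRGS (Fin.snoc ρ v : Fin (m + 1) → ℕ) ↔ IsRGS ρ ∧ 1 ≤ v ∧ v ≤ 1 + Finset.univ.sup ρ := by
  simp only [isRGS_iff, Fin.forall_fin_succ', Fin.snoc_castSucc, Fin.snoc_last,
    Fin.sup_Iio_castSucc_snoc, Fin.sup_Iio_last_snoc]

theorem isRGS_cons_one_iff {m : ℕ} {σ : Fin m → ℕ} (hσ : ∀ h : 0 < m, σ ⟨0, h⟩ = 1) :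
    IsRGS (Fin.cons 1 σ : Fin (m + 1) → ℕ) ↔ IsRGS σ := by
  simp only [isRGS_iff, Fin.forall_fin_succ, Fin.cons_zero, Fin.cons_succ, Fin.sup_Iio_succ_cons]
  constructor
  · rintro ⟨-, h⟩ i
    refine ⟨(h i).1, ?_⟩
    rcases Nat.eq_zero_or_pos i.val with hi | hi
    · have : σ i = 1 := (congrArg σ (Fin.ext hi)).trans (hσ (by omega))
      omega
    · have : 1 ≤ (Finset.Iio i).sup σ :=
        hσ (by omega) ▸ Finset.le_sup (Finset.mem_Iio.2 (Fin.lt_def.2 hi))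
      have := (h i).2
      omega
  · intro h
    exact ⟨by simp, fun i => ⟨(h i).1, (h i).2.trans (by simp)⟩⟩

theorem IsRGS.apply_le {n : ℕ} {π : Fin n → ℕ} (hπ : IsRGS π) (i : Fin n) : π i ≤ i.val + 1 := by
  induction i using WellFoundedLT.induction with
  | _ i ih =>
    have hsup : (Finset.Iio i).sup π ≤ i.val := Finset.sup_le fun ℓ hℓ => by
      have := ih ℓ (Finset.mem_Iio.1 hℓ)
      have := Fin.lt_def.1 (Finset.mem_Iio.1 hℓ)
      omega
    have := (isRGS_iff.1 hπ i).2
    omega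

theorem IsRGS.sup_le {n : ℕ} {π : Fin n → ℕ} (hπ : IsRGS π) : Finset.univ.sup π ≤ n :=
  Finset.sup_le fun i _ => (hπ.apply_le i).trans i.isLt

theorem finite_setOf_isRGS (n : ℕ) : {π : Fin n → ℕ | IsRGS π}.Finite :=
  (Set.Finite.pi fun _ => Set.finite_Iic n).subset fun _ hπ i _ =>
    (hπ.apply_le i).trans i.isLt

def rgsWithMax (m k : ℕ) : Set (Fin m → ℕ) := {π | IsRGS π ∧ Finset.univ.sup π = k}

theorem rgsWithMax_succ_succ (m k : ℕ) :
    rgsWithMax (m + 1) (k + 1) =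
      (fun p : (Fin m → ℕ) × ℕ => (Fin.snoc p.1 p.2 : Fin (m + 1) → ℕ)) ''
        (rgsWithMax m (k + 1) ×ˢ Set.Icc 1 (k + 1) ∪ rgsWithMax m k ×ˢ {k + 1}) := by
  ext π
  rw [← Fin.snoc_init_self π]
  refine Iff.trans ?_
    (Fin.snoc_uncurry_injective.mem_set_image (a := (Fin.init π, π (Fin.last m)))).symm
  simp only [rgsWithMax, Set.mem_ofPred_eq, isRGS_snoc_iff, Fin.sup_univ_snoc, Set.mem_union,
    Set.mem_prod, Set.mem_Icc, Set.mem_singleton_iff]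
  by_cases hρ : IsRGS (Fin.init π)
  · simp only [hρ, true_and]
    omega
  · simp [hρ]

theorem ncard_rgsWithMax : ∀ m k : ℕ, (rgsWithMax m k).ncard = stirlingS2 m k
  | 0, 0 => by
    have : rgsWithMax 0 0 = Set.univ :=
      Set.eq_univ_of_forall fun π => ⟨isRGS_iff.2 nofun, by simp⟩
    simp [this, stirlingS2]
  | 0, k + 1 => by
    have : rgsWithMax 0 (k + 1) = ∅ :=
      Set.eq_empty_of_forall_notMem fun π h => by simpa using h.2
    simp [this, stirlingS2]
  | m + 1, 0 => by
    have : rgsWithMax (m + 1) 0 = ∅ := Set.eq_empty_of_forall_notMem fun π h => by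
      have := h.2 ▸ Finset.le_sup (f := π) (Finset.mem_univ 0)
      have := (isRGS_iff.1 h.1 0).1
      omega
    simp [this, stirlingS2]
  | m + 1, k + 1 => by
    have hfin (k : ℕ) : (rgsWithMax m k).Finite := (finite_setOf_isRGS m).subset fun _ h => h.1
    have hdisj :
        Disjoint (rgsWithMax m (k + 1) ×ˢ Set.Icc 1 (k + 1)) (rgsWithMax m k ×ˢ {k + 1}) :=
      Set.disjoint_left.2 fun _ h₁ h₂ => by have := h₁.1.2.symm.trans h₂.1.2; omega
    rw [rgsWithMax_succ_succ, Set.ncard_image_of_injective _ Fin.snoc_uncurry_injective,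
      Set.ncard_union_eq hdisj ((hfin _).prod (Set.finite_Icc _ _))
        ((hfin _).prod (Set.finite_singleton _)),
      Set.ncard_prod, Set.ncard_prod, ncard_rgsWithMax m (k + 1), ncard_rgsWithMax m k,
      Set.ncard_singleton, Set.ncard_Icc_nat, add_tsub_cancel_right, stirlingS2]
    ring

theorem ncard_setOf_isRGS (m : ℕ) : {π : Fin m → ℕ | IsRGS π}.ncard = bell m := by
  have hunion :
      {π : Fin m → ℕ | IsRGS π} = ⋃ k ∈ (Finset.range (m + 1) : Set ℕ), rgsWithMax m k := by
    ext π
    simp only [Set.mem_ofPred_eq, Set.mem_iUnion, Finset.coe_range, Set.mem_Iio, rgsWithMax]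
    exact ⟨fun hπ => ⟨_, Nat.lt_succ_of_le hπ.sup_le, hπ, rfl⟩, fun ⟨_, _, hπ, _⟩ => hπ⟩
  rw [hunion, Set.Finite.ncard_biUnion (Finset.finite_toSet _)
      (fun k _ => (finite_setOf_isRGS m).subset fun _ h => h.1)
      (fun _ _ _ _ hkl => Set.disjoint_left.2 fun _ h₁ h₂ => hkl (h₁.2.symm.trans h₂.2)),
    finsum_mem_coe_finset, bell]
  exact Finset.sum_congr rfl fun k _ => ncard_rgsWithMax m k

theorem Fin.forall_val_le_cons_eq_iff {n : ℕ} (a b d : ℕ) (σ : Fin n → ℕ) :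
    (∀ i : Fin (n + 1), i.val ≤ d + 1 → (Fin.cons a σ : Fin (n + 1) → ℕ) i = b) ↔
      a = b ∧ ∀ i : Fin n, i.val ≤ d → σ i = b := by
  simp [Fin.forall_fin_succ]

theorem ncard_setOf_isRGS_and_prefix_eq_one (m d : ℕ) :
    {π : Fin (m + d) → ℕ | IsRGS π ∧ ∀ i : Fin (m + d), i.val ≤ d → π i = 1}.ncard = bell m := by
  induction d with
  | zero =>
    rw [← ncard_setOf_isRGS m]
    congr 1
    exact Set.ext fun π => and_iff_left_of_imp fun hπ i hi =>
      (congrArg π (Fin.ext (Nat.le_zero.1 hi))).trans (hπ.2.1 i.pos)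
  | succ d ih =>
    rw [← ih]
    refine (congrArg Set.ncard (Set.ext fun π => ?_)).trans
      (Set.ncard_image_of_injective _ (Fin.cons_right_injective (α := fun _ => ℕ) 1))
    obtain ⟨a, σ, rfl⟩ : ∃ a σ, π = (Fin.cons a σ : Fin (m + d + 1) → ℕ) :=
      ⟨π 0, Fin.tail π, (Fin.cons_self_tail π).symm⟩
    -- `m + (d + 1)` is only definitionally `m + d + 1`; restate so that the `cons` lemma applies.
    change (_ ∧ ∀ i : Fin (m + d + 1), i.val ≤ d + 1 →
      (Fin.cons a σ : Fin (m + d + 1) → ℕ) i = 1) ↔ _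
    simp only [Fin.forall_val_le_cons_eq_iff, Set.mem_image, Set.mem_ofPred_eq, Fin.cons_inj,
      exists_eq_right_right]
    have hσ (hP : ∀ i : Fin (m + d), i.val ≤ d → σ i = 1) : ∀ h : 0 < m + d, σ ⟨0, h⟩ = 1 :=
      fun h => hP ⟨0, h⟩ (Nat.zero_le d)
    constructor
    · rintro ⟨h, rfl, hP⟩
      exact ⟨⟨(isRGS_cons_one_iff (hσ hP)).1 h, hP⟩, rfl⟩
    · rintro ⟨⟨h, hP⟩, rfl⟩
      exact ⟨(isRGS_cons_one_iff (hσ hP)).2 h, rfl, hP⟩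

theorem IsRGS.weakVisible_zero_iff {n : ℕ} {π : Fin n → ℕ} (hπ : IsRGS π) (h0 : 0 < n)
    {k : Fin n} (hk : 0 < k.val) : WeakVisible π ⟨0, h0⟩ k ↔ ∀ i < k, π i = 1 := by
  constructor
  · rintro ⟨-, h⟩ i hi
    rcases Nat.eq_zero_or_pos i.val with hi0 | hi0
    · exact (congrArg π (Fin.ext hi0)).trans (hπ.2.1 h0)
    · have := h i (Fin.lt_def.2 hi0) hi
      have := hπ.1 i
      have := hπ.2.1 h0
      omega
  · intro h
    refine ⟨Fin.lt_def.2 hk, fun ℓ _ hℓ => ?_⟩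
    rw [h ℓ hℓ, h _ (Fin.lt_def.2 hk)]
    exact le_min le_rfl (hπ.1 k)

theorem IsRGS.not_strongVisible_zero {n : ℕ} {π : Fin n → ℕ} (hπ : IsRGS π) (h0 : 0 < n)
    {ℓ k : Fin n} (hℓ : ⟨0, h0⟩ < ℓ) (hℓk : ℓ < k) : ¬ StrongVisible π ⟨0, h0⟩ k := fun h => by
  have := h.2 ℓ hℓ hℓk
  have := hπ.1 ℓ
  have := hπ.2.1 h0
  omega

theorem stmt13_general (n j : ℕ) (hj : 3 ≤ j)
    (h1 : 0 < n) (hj' : j - 1 < n) :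
    ({π : Fin n → ℕ | IsRGS π ∧ WeakVisible π ⟨0, h1⟩ ⟨j - 1, hj'⟩ ∧
        ¬ StrongVisible π ⟨0, h1⟩ ⟨j - 1, hj'⟩}.ncard : ℚ) / (bell n : ℚ) =
      (bell (n - j + 2) : ℚ) / (bell n : ℚ) := by
  have hset : {π : Fin n → ℕ | IsRGS π ∧ WeakVisible π ⟨0, h1⟩ ⟨j - 1, hj'⟩ ∧
        ¬ StrongVisible π ⟨0, h1⟩ ⟨j - 1, hj'⟩} =
      {π : Fin n → ℕ | IsRGS π ∧ ∀ i : Fin n, i.val ≤ j - 2 → π i = 1} := by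
    refine Set.ext fun π => and_congr_right fun hπ => ?_
    rw [and_iff_left (hπ.not_strongVisible_zero h1 (ℓ := ⟨1, by omega⟩)
        (Fin.lt_def.2 one_pos) (Fin.lt_def.2 (show 1 < j - 1 by omega))),
      hπ.weakVisible_zero_iff h1 (show 0 < j - 1 by omega)]
    exact forall_congr' fun i => imp_congr_left (show i.val < j - 1 ↔ i.val ≤ j - 2 by omega)
  obtain ⟨m, rfl⟩ : ∃ m, n = m + (j - 2) := ⟨n - (j - 2), by omega⟩
  rw [hset, ncard_setOf_isRGS_and_prefix_eq_one, show m + (j - 2) - j + 2 = m by omega]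

/-- For a uniformly random restricted growth sequence of length `n ≥ 3` and a pair
`(1, j)` with `3 ≤ j ≤ n` (1-indexed positions), the probability that `(1,j)` is a
weak but not strong visible pair equals `B_{n-j+2} / B_n`. -/
theorem stmt13 (n j : ℕ) (hn : 3 ≤ n) (hj : 3 ≤ j) (hjn : j ≤ n)
    (h1 : 0 < n) (hj' : j - 1 < n) :
    ({π : Fin n → ℕ | IsRGS π ∧ WeakVisible π ⟨0, h1⟩ ⟨j - 1, hj'⟩ ∧
        ¬ StrongVisible π ⟨0, h1⟩ ⟨j - 1, hj'⟩}.ncard : ℚ) / (bell n : ℚ) =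
      (bell (n - j + 2) : ℚ) / (bell n : ℚ) :=
  stmt13_general n j hj h1 hj'
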